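/- Let d ≥ 2 and let f : ℝ^d → ℂ be continuous with compact support contained in the open forward cone {p ∈ ℝ^d : p⁰ > |p⃗|}. Then ∫_{ℝ^d} f(p) dp = ∫_0^∞ ( ∫_{ℝ^{d−1}} f(ω_r(p⃗), p⃗) · (2ω_r(p⃗))^{−1} dp⃗ ) dr; equivalently, Lebesgue measure on the forward cone disintegrates as ∫_0^∞ μ_r^+ dr. -/

import Mathlib

/-!
Split `p = (p⁰, p⃗)`, so that Lebesgue measure on `ℝ^(m+1)` is the product of Lebesgue
measures on `ℝ` and `ℝᵐ`, and integrate over `p⁰` first. For fixed `p⃗` the integrand vanishes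
unless `p⁰ > |p⃗|`, and on that half-line the substitution `p⁰ = ω_r(p⃗)`, `r ∈ (0, ∞)`, has
Jacobian `dω_r/dr = (2ω_r)⁻¹`. Fubini then exchanges `dp⃗` and `dr`.
-/

open MeasureTheory

noncomputable section

/-- Spatial part of a spacetime point. -/
def spatial {m : ℕ} (p : EuclideanSpace ℝ (Fin (m + 1))) : EuclideanSpace ℝ (Fin m) :=
  WithLp.toLp 2 (fun j : Fin m => p j.succ)

/-- `ω_r(p⃗) = √(|p⃗|² + r)`. -/
def omg {m : ℕ} (r : ℝ) (v : EuclideanSpace ℝ (Fin m)) : ℝ :=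
  Real.sqrt (‖v‖ ^ 2 + r)

/-- Embedding of `ℝ^m` onto the forward mass shell: `p⃗ ↦ (ω_r(p⃗), p⃗)`. -/
def embed {m : ℕ} (r : ℝ) (v : EuclideanSpace ℝ (Fin m)) :
    EuclideanSpace ℝ (Fin (m + 1)) :=
  WithLp.toLp 2 (Fin.cons (omg r v) v.ofLp : Fin (m + 1) → ℝ)

open Set

/-- `(x, v) ↦ (x, v¹, …, vᵐ)`. -/
def consEquiv (m : ℕ) : (ℝ × EuclideanSpace ℝ (Fin m)) ≃ᵐ EuclideanSpace ℝ (Fin (m + 1)) :=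
  (MeasurableEquiv.prodCongr (MeasurableEquiv.refl ℝ)
      (MeasurableEquiv.toLp 2 (Fin m → ℝ)).symm).trans
    (((MeasurableEquiv.piFinSuccAbove (fun _ : Fin (m + 1) => ℝ) 0).symm).trans
      (MeasurableEquiv.toLp 2 (Fin (m + 1) → ℝ)))

section consEquiv

variable {m : ℕ}

lemma consEquiv_apply (z : ℝ × EuclideanSpace ℝ (Fin m)) :
    consEquiv m z = WithLp.toLp 2 (Fin.cons z.1 z.2.ofLp : Fin (m + 1) → ℝ) := by
  simp [consEquiv, MeasurableEquiv.piFinSuccAbove]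
  rfl

lemma consEquiv_apply_zero (x : ℝ) (v : EuclideanSpace ℝ (Fin m)) :
    consEquiv m (x, v) 0 = x := by
  simp [consEquiv_apply]

lemma spatial_consEquiv (x : ℝ) (v : EuclideanSpace ℝ (Fin m)) :
    spatial (consEquiv m (x, v)) = v := by
  ext j
  simp [spatial, consEquiv_apply]

lemma embed_eq_consEquiv (r : ℝ) (v : EuclideanSpace ℝ (Fin m)) :
    embed r v = consEquiv m (omg r v, v) := by
  rw [consEquiv_apply]
  rfl

lemma measurePreserving_consEquiv :
    MeasurePreserving (consEquiv m) ((volume : Measure ℝ).prod volume) volume := by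
  have hcons : MeasurePreserving (MeasurableEquiv.piFinSuccAbove (fun _ : Fin (m + 1) => ℝ) 0).symm
      ((volume : Measure ℝ).prod (volume : Measure (Fin m → ℝ))) volume := by
    simpa [volume_pi] using
      (measurePreserving_piFinSuccAbove (fun _ : Fin (m + 1) => (volume : Measure ℝ)) 0).symm
  exact ((EuclideanSpace.volume_preserving_symm_measurableEquiv_toLp _).symm.comp hcons).comp
    ((MeasurePreserving.id _).prod (EuclideanSpace.volume_preserving_symm_measurableEquiv_toLp _))

end consEquiv

section omg

variable {m : ℕ} (v : EuclideanSpace ℝ (Fin m)) {E : Type*} [NormedAddCommGroup E]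
  [NormedSpace ℝ E]

lemma omg_pos {r : ℝ} (hr : 0 < r) : 0 < omg r v :=
  Real.sqrt_pos.2 (by positivity)

lemma norm_lt_omg {r : ℝ} (hr : 0 < r) : ‖v‖ < omg r v := by
  rw [← Real.sqrt_sq (norm_nonneg v), omg]
  exact Real.sqrt_lt_sqrt (by positivity) (by linarith)

lemma image_omg_Ioi : (omg · v) '' Ioi 0 = Ioi ‖v‖ := by
  refine Subset.antisymm (image_subset_iff.2 fun r hr => norm_lt_omg v hr) fun y hy => ?_
  have hy₀ : 0 ≤ y := (norm_nonneg v).trans hy.le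
  refine ⟨y ^ 2 - ‖v‖ ^ 2, sub_pos.2 (pow_lt_pow_left₀ hy (norm_nonneg v) two_ne_zero), ?_⟩
  simp only [omg, add_sub_cancel, Real.sqrt_sq hy₀]

lemma injOn_omg : InjOn (omg · v) (Ioi 0) := by
  intro a (ha : 0 < a) b (hb : 0 < b) hab
  have := (Real.sqrt_inj (by positivity : 0 ≤ ‖v‖ ^ 2 + a) (by positivity)).1 hab
  linarith

lemma hasDerivAt_omg {r : ℝ} (hr : 0 < r) : HasDerivAt (omg · v) (2 * omg r v)⁻¹ r := by
  simpa [omg] using ((hasDerivAt_id r).const_add (‖v‖ ^ 2)).sqrt (by positivity)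

lemma abs_inv_two_mul_omg {r : ℝ} (hr : 0 < r) : |(2 * omg r v)⁻¹| = (2 * omg r v)⁻¹ :=
  abs_of_pos (by have := omg_pos v hr; positivity)

lemma integral_Ioi_norm_eq_integral_Ioi_omg (g : ℝ → E) :
    ∫ x in Ioi ‖v‖, g x = ∫ r in Ioi 0, (2 * omg r v)⁻¹ • g (omg r v) := by
  rw [← image_omg_Ioi v, integral_image_eq_integral_abs_deriv_smul measurableSet_Ioi
    (fun r hr => (hasDerivAt_omg v hr).hasDerivWithinAt) (injOn_omg v) g]
  exact setIntegral_congr_fun measurableSet_Ioi fun r hr => by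
    rw [abs_inv_two_mul_omg v hr]

lemma integrableOn_Ioi_norm_iff_integrableOn_Ioi_omg (g : ℝ → E) :
    IntegrableOn g (Ioi ‖v‖) ↔
      IntegrableOn (fun r => (2 * omg r v)⁻¹ • g (omg r v)) (Ioi 0) := by
  rw [← image_omg_Ioi v, integrableOn_image_iff_integrableOn_abs_deriv_smul measurableSet_Ioi
    (fun r hr => (hasDerivAt_omg v hr).hasDerivWithinAt) (injOn_omg v) g]
  exact integrableOn_congr_fun (fun r hr => by rw [abs_inv_two_mul_omg v hr]) measurableSet_Ioi

lemma integral_eq_integral_Ioi_omg {g : ℝ → E} (hg : ∀ x ≤ ‖v‖, g x = 0) :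
    ∫ x, g x = ∫ r in Ioi 0, (2 * omg r v)⁻¹ • g (omg r v) := by
  rw [← integral_Ioi_norm_eq_integral_Ioi_omg]
  exact (setIntegral_eq_integral_of_forall_compl_eq_zero fun x hx => hg x (not_lt.1 hx)).symm

lemma continuous_omg_uncurry :
    Continuous fun z : EuclideanSpace ℝ (Fin m) × ℝ => omg z.2 z.1 :=
  Real.continuous_sqrt.comp ((continuous_fst.norm.pow 2).add continuous_snd)

end omg

theorem integral_prod_eq_integral_Ioi_integral_omg {m : ℕ} {E : Type*} [NormedAddCommGroup E]
    [NormedSpace ℝ E] {g : ℝ × EuclideanSpace ℝ (Fin m) → E} (hg : Integrable g)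
    (hgm : StronglyMeasurable g) (hsupp : ∀ x v, x ≤ ‖v‖ → g (x, v) = 0) :
    ∫ z, g z ∂(volume.prod volume) =
      ∫ r in Ioi 0, ∫ v, (2 * omg r v)⁻¹ • g (omg r v, v) := by
  set F : EuclideanSpace ℝ (Fin m) × ℝ → E :=
    fun z => (2 * omg z.2 z.1)⁻¹ • g (omg z.2 z.1, z.1)
  have hFm : AEStronglyMeasurable F (volume.prod (volume.restrict (Ioi 0))) :=
    (continuous_const.mul continuous_omg_uncurry).measurable.inv.aestronglyMeasurable.smul
      (hgm.comp_measurable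
        (continuous_omg_uncurry.prodMk continuous_fst).measurable).aestronglyMeasurable
  have hF : Integrable F (volume.prod (volume.restrict (Ioi 0))) := by
    refine (integrable_prod_iff hFm).2 ⟨?_, ?_⟩
    · filter_upwards [hg.swap.prod_right_ae] with v hv
      exact (integrableOn_Ioi_norm_iff_integrableOn_Ioi_omg v _).1 hv.integrableOn
    · refine hg.swap.integral_norm_prod_left.congr (.of_forall fun v => ?_)
      simp only [Function.comp_apply, Prod.swap_prod_mk]
      rw [integral_eq_integral_Ioi_omg v fun x hx => by simp [hsupp x v hx]]
      refine setIntegral_congr_fun measurableSet_Ioi fun r hr => ?_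
      simp only [F, norm_smul, smul_eq_mul, Real.norm_eq_abs, abs_inv_two_mul_omg v hr]
  calc ∫ z, g z ∂(volume.prod volume)
      = ∫ v, ∫ x, g (x, v) := integral_prod_symm g hg
    _ = ∫ v, ∫ r in Ioi 0, F (v, r) :=
        integral_congr_ae (.of_forall fun v => integral_eq_integral_Ioi_omg v (hsupp · v))
    _ = ∫ r in Ioi 0, ∫ v, F (v, r) := integral_integral_swap hF

theorem statement3_general (m : ℕ)
    (f : EuclideanSpace ℝ (Fin (m + 1)) → ℂ)
    (hf : Continuous f) (hcs : HasCompactSupport f)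
    (hsupp : tsupport f ⊆ {p | ‖spatial p‖ < p 0}) :
    ∫ p, f p
      = ∫ r in Set.Ioi (0 : ℝ), ∫ v : EuclideanSpace ℝ (Fin m),
          f (embed r v) * (((2 * omg r v)⁻¹ : ℝ) : ℂ) := by
  have hvanish : ∀ x v, x ≤ ‖v‖ → f (consEquiv m (x, v)) = 0 := fun x v hx =>
    image_eq_zero_of_notMem_tsupport fun hmem => by
      have := hsupp hmem
      simp only [mem_ofPred_eq, spatial_consEquiv, consEquiv_apply_zero] at this
      linarith
  have hint : Integrable (fun z => f (consEquiv m z)) (volume.prod volume) :=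
    (measurePreserving_consEquiv.integrable_comp_emb (consEquiv m).measurableEmbedding).2
      (hf.integrable_of_hasCompactSupport hcs)
  rw [← measurePreserving_consEquiv.integral_comp' f,
    integral_prod_eq_integral_Ioi_integral_omg hint
      (hf.stronglyMeasurable.comp_measurable (consEquiv m).measurable) hvanish]
  simp only [embed_eq_consEquiv, Complex.real_smul, mul_comm]

/-- Lebesgue measure on the open forward cone disintegrates over the forward
mass-shell measures: `∫ f = ∫_0^∞ (∫ f dμ_r^+) dr` for continuous `f` compactly
supported in `{p : p⁰ > |p⃗|}`. -/
theorem statement3 (m : ℕ) (hm : 1 ≤ m)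
    (f : EuclideanSpace ℝ (Fin (m + 1)) → ℂ)
    (hf : Continuous f) (hcs : HasCompactSupport f)
    (hsupp : tsupport f ⊆ {p | ‖spatial p‖ < p 0}) :
    ∫ p, f p
      = ∫ r in Set.Ioi (0 : ℝ), ∫ v : EuclideanSpace ℝ (Fin m),
          f (embed r v) * (((2 * omg r v)⁻¹ : ℝ) : ℂ) :=
  statement3_general m f hf hcs hsupp
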